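/- For real numbers p, α ∈ [0,1] with α ≥ |1 − 2p|, the Shannon entropy (base 2) of the probability vector ((2p−1+α)/2, (1−2p+α)/2, (1−α)/2, (1−α)/2) is at most h(α) + h(p), where h is the binary entropy function. -/

import Mathlib

noncomputable def binEnt (t : ℝ) : ℝ := -(t * Real.logb 2 t) - (1 - t) * Real.logb 2 (1 - t)

/-!
Write `q₁ = α x` and `q₂ = α (1 - x)` with `x ∈ [0, 1]`, so that the four weights form the joint law
of a pair of bits whose first coordinate is `α`-biased and whose second coordinate, given the first,
is `x`- resp. `½`-biased. The marginal of the second bit is `α x + (1 - α) / 2 = p`, and the joint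
entropy is at most the sum of the marginal entropies: by the chain rule it equals
`h(α) + α h(x) + (1 - α) h(½)`, and concavity of `h` bounds `α h(x) + (1 - α) h(½)` by `h(p)`.
-/

open Real Set

lemma negMulLog_mul_add_negMulLog_mul_one_sub (a x : ℝ) :
    negMulLog (a * x) + negMulLog (a * (1 - x)) = negMulLog a + a * binEntropy x := by
  rw [negMulLog_mul, negMulLog_mul, binEntropy_eq_negMulLog_add_negMulLog_one_sub]
  ring

lemma negMulLog_joint_le_binEntropy_add_binEntropy {a x y : ℝ} (ha : a ∈ Icc (0 : ℝ) 1)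
    (hx : x ∈ Icc (0 : ℝ) 1) (hy : y ∈ Icc (0 : ℝ) 1) :
    negMulLog (a * x) + negMulLog (a * (1 - x))
        + (negMulLog ((1 - a) * y) + negMulLog ((1 - a) * (1 - y)))
      ≤ binEntropy a + binEntropy (a * x + (1 - a) * y) := by
  have hconcave := strictConcave_binEntropy.concaveOn.2 hx hy ha.1 (sub_nonneg.2 ha.2)
    (add_sub_cancel a 1)
  simp only [smul_eq_mul] at hconcave
  rw [negMulLog_mul_add_negMulLog_mul_one_sub, negMulLog_mul_add_negMulLog_mul_one_sub,
    binEntropy_eq_negMulLog_add_negMulLog_one_sub a]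
  linarith

lemma mul_logb_two_eq_neg_negMulLog_div (q : ℝ) : q * logb 2 q = -(negMulLog q / log 2) := by
  rw [logb, negMulLog]
  ring

lemma binEnt_eq_binEntropy_div_log_two (t : ℝ) : binEnt t = binEntropy t / log 2 := by
  rw [binEnt, binEntropy_eq_negMulLog_add_negMulLog_one_sub, mul_logb_two_eq_neg_negMulLog_div,
    mul_logb_two_eq_neg_negMulLog_div]
  ring

lemma exists_mem_Icc_mul_eq_of_abs_le {p α : ℝ} (hα0 : 0 ≤ α) (h : |1 - 2 * p| ≤ α) :
    ∃ x ∈ Icc (0 : ℝ) 1, (2 * p - 1 + α) / 2 = α * x := by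
  obtain ⟨hlo, hhi⟩ := abs_le.mp h
  rcases hα0.eq_or_lt with rfl | hα
  · exact ⟨0, left_mem_Icc.2 zero_le_one, by linarith⟩
  · refine ⟨(2 * p - 1 + α) / (2 * α), ⟨div_nonneg (by linarith) (by positivity), ?_⟩,
      by field_simp⟩
    rw [div_le_one (by positivity)]
    linarith

theorem stmt15_general (p α : ℝ) (hα0 : 0 ≤ α) (hα1 : α ≤ 1)
    (h : |1 - 2 * p| ≤ α) :
    -(((2 * p - 1 + α) / 2) * Real.logb 2 ((2 * p - 1 + α) / 2))
      - ((1 - 2 * p + α) / 2) * Real.logb 2 ((1 - 2 * p + α) / 2)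
      - ((1 - α) / 2) * Real.logb 2 ((1 - α) / 2)
      - ((1 - α) / 2) * Real.logb 2 ((1 - α) / 2)
    ≤ binEnt α + binEnt p := by
  obtain ⟨x, hx, hq₁⟩ := exists_mem_Icc_mul_eq_of_abs_le hα0 h
  have hq₂ : (1 - 2 * p + α) / 2 = α * (1 - x) := by linear_combination -hq₁
  have hq₃ : (1 - α) / 2 = (1 - α) * (1 / 2) := by ring
  have hq₄ : (1 - α) / 2 = (1 - α) * (1 - 1 / 2) := by ring
  have hmarginal : α * x + (1 - α) * (1 / 2) = p := by linear_combination -hq₁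
  have hjoint := negMulLog_joint_le_binEntropy_add_binEntropy ⟨hα0, hα1⟩ hx
    ⟨one_half_pos.le, by norm_num⟩
  rw [hmarginal, ← hq₁, ← hq₂, ← hq₃, ← hq₄] at hjoint
  calc _ = (negMulLog ((2 * p - 1 + α) / 2) + negMulLog ((1 - 2 * p + α) / 2)
          + (negMulLog ((1 - α) / 2) + negMulLog ((1 - α) / 2))) / log 2 := by
        simp only [mul_logb_two_eq_neg_negMulLog_div]
        ring
    _ ≤ (binEntropy α + binEntropy p) / log 2 := by gcongr
    _ = binEnt α + binEnt p := by
        rw [binEnt_eq_binEntropy_div_log_two, binEnt_eq_binEntropy_div_log_two, add_div]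

/-- H((2p−1+α)/2, (1−2p+α)/2, (1−α)/2, (1−α)/2) ≤ h(α) + h(p). -/
theorem stmt15 (p α : ℝ) (hp0 : 0 ≤ p) (hp1 : p ≤ 1) (hα0 : 0 ≤ α) (hα1 : α ≤ 1)
    (h : |1 - 2 * p| ≤ α) :
    -(((2 * p - 1 + α) / 2) * Real.logb 2 ((2 * p - 1 + α) / 2))
      - ((1 - 2 * p + α) / 2) * Real.logb 2 ((1 - 2 * p + α) / 2)
      - ((1 - α) / 2) * Real.logb 2 ((1 - α) / 2)
      - ((1 - α) / 2) * Real.logb 2 ((1 - α) / 2)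
    ≤ binEnt α + binEnt p :=
  stmt15_general p α hα0 hα1 h
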